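/- Let D₁, D₂, K_r, K_h be positive integers. Let CS_r : ℝ^{D₁} → ℝ^{K_r} and CS_h : ℝ^{D₂} → ℝ^{K_h} be two CountSketches, each following the random CountSketch model, whose hash/sign randomness is mutually independent. Fix vectors r̃, r̃′ ∈ ℝ^{D₁} and h, h′ ∈ ℝ^{D₂}, and define A = ⟨CS_r(r̃), CS_r(r̃′)⟩, B = ⟨CS_h(h), CS_h(h′)⟩, α = ⟨r̃, r̃′⟩, β = ⟨h, h′⟩. Then E[A·B] = α·β, and Var[A·B] ≤ V_r·V_h + α²·V_h + β²·V_r, where V_r = (‖r̃‖₂²·‖r̃′‖₂² + α²)/K_r and V_h = (‖h‖₂²·‖h′‖₂² + β²)/K_h. -/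

import Mathlib

open MeasureTheory ProbabilityTheory
open scoped BigOperators

/-- The random CountSketch model on a probability space `(Ω, P)`: a random bucket
hash `η : Fin D → Fin K` and random signs `s : Fin D → {−1,+1}` such that the
signs are mutually independent and uniform on `{−1,+1}`, the bucket hash is
independent of the signs, and `P(η(i) = η(j)) = 1/K` for all `i ≠ j`. -/
structure CountSketchModel (Ω : Type*) [MeasurableSpace Ω] (P : MeasureTheory.Measure Ω)
    (D K : ℕ) where
  η : Ω → Fin D → Fin K
  s : Ω → Fin D → ℝ
  meas_η : Measurable η
  meas_s : Measurable s
  sign_val : ∀ ω i, s ω i = 1 ∨ s ω i = -1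
  sign_prob : ∀ i, P {ω | s ω i = 1} = 1 / 2
  sign_indep : iIndepFun (fun i ω => s ω i) P
  hash_indep_sign : IndepFun η s P
  collision : ∀ i j, i ≠ j → P {ω | η ω i = η ω j} = (K : ENNReal)⁻¹

/-- The CountSketch of `x ∈ ℝ^D`: `CS(x)_k = ∑_{i : η(i) = k} s(i)·x_i`. -/
def CountSketchModel.CS {Ω : Type*} [MeasurableSpace Ω] {P : MeasureTheory.Measure Ω}
    {D K : ℕ} (M : CountSketchModel Ω P D K) (ω : Ω) (x : Fin D → ℝ) :
    Fin K → ℝ :=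
  fun k => ∑ i, if M.η ω i = k then M.s ω i * x i else 0

/-- The variance `Var[f] = E[f²] - (E[f])²` of a real random variable. -/
noncomputable def var {Ω : Type*} [MeasurableSpace Ω] (P : Measure Ω) (f : Ω → ℝ) : ℝ :=
  (∫ ω, f ω ^ 2 ∂P) - (∫ ω, f ω ∂P) ^ 2

/-! Expanding the product, `⟨CS(x), CS(y)⟩ = ⟨x, y⟩ + Z` with
`Z = ∑_{i ≠ j} [η i = η j] s_i s_j x_i y_j`. The hash is independent of the signs, so every
moment of `Z` factors into a collision probability times a moment of the signs. Each term of `Z`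
has mean zero, and in `E[Z²]` the product of the terms for `(i, j)` and `(k, l)` has mean zero
unless `{k, l} = {i, j}`, since otherwise some sign occurs in it exactly once. Hence
`Var ⟨CS(x), CS(y)⟩ = E[Z²] = K⁻¹ ∑_{i ≠ j} x_i y_j (x_i y_j + x_j y_i)`,
which is at most `(‖x‖²‖y‖² + ⟨x, y⟩²) / K`. For independent `A` and `B`,
`Var[AB] = Var A · Var B + E[A]² Var B + E[B]² Var A`, and the bounds combine. -/

open Finset

section FiniteSums

variable {ι κ : Type*} [Fintype ι]

lemma sum_bucket_mul_sum_bucket {R : Type*} [Fintype κ] [DecidableEq κ] [CommSemiring R]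
    (e : ι → κ) (a b : ι → R) :
    ∑ k, (∑ i, if e i = k then a i else 0) * (∑ j, if e j = k then b j else 0)
      = ∑ p : ι × ι, if e p.1 = e p.2 then a p.1 * b p.2 else 0 := by
  simp_rw [sum_mul_sum, ite_zero_mul_ite_zero, ite_and]
  rw [sum_comm, Fintype.sum_prod_type]
  refine sum_congr rfl fun i _ => ?_
  rw [sum_comm]
  refine sum_congr rfl fun j _ => ?_
  simp [eq_comm]

variable [DecidableEq ι]

lemma sum_prod_eq_sum_diag_add_sum_offDiag {M : Type*} [AddCommMonoid M] (f : ι × ι → M) :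
    ∑ p, f p = ∑ i, f (i, i) + ∑ p ∈ univ.offDiag, f p := by
  rw [← univ_product_univ, ← diag_union_offDiag, sum_union (disjoint_diag_offDiag _), diag,
    sum_map]
  rfl

lemma sum_offDiag_le (x y : ι → ℝ) :
    ∑ p ∈ univ.offDiag, x p.1 * y p.2 * (x p.1 * y p.2 + x p.2 * y p.1)
      ≤ (∑ i, x i ^ 2) * (∑ i, y i ^ 2) + (∑ i, x i * y i) ^ 2 := by
  have hfull : ∑ p : ι × ι, x p.1 * y p.2 * (x p.1 * y p.2 + x p.2 * y p.1)
      = (∑ i, x i ^ 2) * (∑ i, y i ^ 2) + (∑ i, x i * y i) ^ 2 := by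
    simp only [sq, sum_mul_sum, Fintype.sum_prod_type, ← sum_add_distrib]
    exact sum_congr rfl fun i _ => sum_congr rfl fun j _ => by ring
  rw [← hfull]
  refine sum_le_sum_of_subset_of_nonneg (subset_univ _) fun p _ hp => ?_
  obtain ⟨i, j⟩ := p
  obtain rfl : i = j := by simpa using hp
  nlinarith [sq_nonneg (x i * y i)]

end FiniteSums

section Hashing

variable {ι κ : Type*} [DecidableEq κ]

def sketch [Fintype ι] (e : ι → κ) (t x : ι → ℝ) (k : κ) : ℝ :=
  ∑ i, if e i = k then t i * x i else 0

lemma measurable_sum_sketch_mul_sketch [Fintype ι] [Fintype κ] [MeasurableSpace κ]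
    [MeasurableSingletonClass κ] (x y : ι → ℝ) :
    Measurable fun z : (ι → κ) × (ι → ℝ) =>
      ∑ k, sketch z.1 z.2 x k * sketch z.1 z.2 y k := by
  refine measurable_from_prod_countable_right fun e => ?_
  have h (x : ι → ℝ) (k : κ) : Measurable fun t : ι → ℝ => sketch e t x k :=
    measurable_sum _ fun i _ => Measurable.ite (.const _) (by fun_prop) measurable_const
  exact measurable_sum _ fun k _ => (h x k).mul (h y k)

def collisionIndicator (p : ι × ι) (e : ι → κ) : ℝ :=
  if e p.1 = e p.2 then 1 else 0

lemma collisionIndicator_swap (p : ι × ι) :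
    collisionIndicator (κ := κ) p.swap = collisionIndicator p := by
  funext e
  simp only [collisionIndicator, Prod.fst_swap, Prod.snd_swap, eq_comm]

lemma collisionIndicator_mul_self (p : ι × ι) (e : ι → κ) :
    collisionIndicator p e * collisionIndicator p e = collisionIndicator p e := by
  unfold collisionIndicator
  split_ifs <;> norm_num

end Hashing

section Variance

variable {Ω : Type*} [MeasurableSpace Ω] {P : Measure Ω}

lemma var_mul_of_indepFun {X Y : Ω → ℝ} (hXY : IndepFun X Y P)
    (hX : AEStronglyMeasurable X P) (hY : AEStronglyMeasurable Y P) :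
    var P (fun ω => X ω * Y ω)
      = var P X * var P Y + (∫ ω, X ω ∂P) ^ 2 * var P Y
        + (∫ ω, Y ω ∂P) ^ 2 * var P X := by
  have hmean : ∫ ω, X ω * Y ω ∂P = (∫ ω, X ω ∂P) * ∫ ω, Y ω ∂P :=
    hXY.integral_mul_eq_mul_integral hX hY
  have hsq : ∫ ω, X ω ^ 2 * Y ω ^ 2 ∂P = (∫ ω, X ω ^ 2 ∂P) * ∫ ω, Y ω ^ 2 ∂P :=
    (hXY.comp (measurable_id.pow_const 2) (measurable_id.pow_const 2)).integral_mul_eq_mul_integral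
      (hX.pow 2) (hY.pow 2)
  simp only [var, mul_pow, hmean, hsq]
  ring

lemma var_const_add_of_integral_eq_zero [IsProbabilityMeasure P] {Z : Ω → ℝ} (c : ℝ)
    (hZ : Integrable Z P) (hZ2 : Integrable (fun ω => Z ω ^ 2) P) (h0 : ∫ ω, Z ω ∂P = 0) :
    var P (fun ω => c + Z ω) = ∫ ω, Z ω ^ 2 ∂P := by
  have hexpand : (fun ω => (c + Z ω) ^ 2) = fun ω => c ^ 2 + (2 * c * Z ω + Z ω ^ 2) := by
    funext ω
    ring
  have hlin : Integrable (fun ω => 2 * c * Z ω + Z ω ^ 2) P := (hZ.const_mul _).add hZ2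
  rw [var, hexpand, integral_add (integrable_const _) hlin, integral_add (hZ.const_mul _) hZ2,
    integral_add (integrable_const _) hZ, integral_const_mul, h0]
  simp

end Variance

namespace CountSketchModel

variable {Ω : Type*} [MeasurableSpace Ω] {P : Measure Ω} {D K : ℕ}
  (M : CountSketchModel Ω P D K)

lemma measurable_sign (i : Fin D) : Measurable fun ω => M.s ω i :=
  (measurable_pi_apply i).comp M.meas_s

lemma sign_mul_self (ω : Ω) (i : Fin D) : M.s ω i * M.s ω i = 1 := by
  rcases M.sign_val ω i with h | h <;> simp [h]

lemma abs_sign (ω : Ω) (i : Fin D) : |M.s ω i| = 1 := by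
  rcases M.sign_val ω i with h | h <;> simp [h]

lemma integral_hash_mul_sign (f : (Fin D → Fin K) → ℝ) {g : (Fin D → ℝ) → ℝ}
    (hg : Measurable g) :
    ∫ ω, f (M.η ω) * g (M.s ω) ∂P = (∫ ω, f (M.η ω) ∂P) * ∫ ω, g (M.s ω) ∂P :=
  (M.hash_indep_sign.comp (measurable_of_countable f) hg).integral_mul_eq_mul_integral
    ((measurable_of_countable f).comp M.meas_η).aestronglyMeasurable
    (hg.comp M.meas_s).aestronglyMeasurable

lemma integral_collisionIndicator {p : Fin D × Fin D} (hp : p.1 ≠ p.2) :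
    ∫ ω, collisionIndicator p (M.η ω) ∂P = (K : ℝ)⁻¹ := by
  have hS : MeasurableSet {ω | M.η ω p.1 = M.η ω p.2} :=
    measurableSet_eq_fun ((measurable_pi_apply _).comp M.meas_η)
      ((measurable_pi_apply _).comp M.meas_η)
  have hindicator : (fun ω => collisionIndicator p (M.η ω))
      = {ω | M.η ω p.1 = M.η ω p.2}.indicator 1 := by
    funext ω
    simp [collisionIndicator, Set.indicator]
  rw [hindicator, integral_indicator_one hS, measureReal_def, M.collision _ _ hp]
  simp

variable (x y : Fin D → ℝ)

lemma CS_eq_sketch (ω : Ω) : M.CS ω x = sketch (M.η ω) (M.s ω) x := rfl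

lemma measurable_sum_CS_mul_CS : Measurable fun ω => ∑ k, M.CS ω x k * M.CS ω y k := by
  have h := (measurable_sum_sketch_mul_sketch (κ := Fin K) x y).comp
    (M.meas_η.prodMk M.meas_s)
  simp only [CS_eq_sketch]
  exact h

lemma indepFun_sum_CS_mul_CS {D' K' : ℕ} (M' : CountSketchModel Ω P D' K')
    (h : IndepFun (fun ω => (M.η ω, M.s ω)) (fun ω => (M'.η ω, M'.s ω)) P)
    (u v : Fin D' → ℝ) :
    IndepFun (fun ω => ∑ k, M.CS ω x k * M.CS ω y k)
      (fun ω => ∑ k, M'.CS ω u k * M'.CS ω v k) P :=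
  h.comp (measurable_sum_sketch_mul_sketch x y) (measurable_sum_sketch_mul_sketch u v)

def pairTerm (p : Fin D × Fin D) (ω : Ω) : ℝ :=
  collisionIndicator p (M.η ω) * (M.s ω p.1 * M.s ω p.2) * (x p.1 * y p.2)

lemma sum_CS_mul_CS (ω : Ω) :
    ∑ k, M.CS ω x k * M.CS ω y k
      = ∑ i, x i * y i + ∑ p ∈ univ.offDiag, M.pairTerm x y p ω := by
  simp only [CS]
  rw [sum_bucket_mul_sum_bucket, sum_prod_eq_sum_diag_add_sum_offDiag]
  congr 1
  · refine sum_congr rfl fun i _ => ?_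
    rw [if_pos rfl]
    linear_combination (x i * y i) * M.sign_mul_self ω i
  · refine sum_congr rfl fun p _ => ?_
    simp only [pairTerm, collisionIndicator]
    split_ifs <;> ring

lemma measurable_pairTerm (p : Fin D × Fin D) : Measurable (M.pairTerm x y p) :=
  (((measurable_of_countable (collisionIndicator p)).comp M.meas_η).mul
    ((M.measurable_sign p.1).mul (M.measurable_sign p.2))).mul_const _

lemma norm_pairTerm_le (p : Fin D × Fin D) (ω : Ω) :
    ‖M.pairTerm x y p ω‖ ≤ |x p.1 * y p.2| := by
  simp only [pairTerm, collisionIndicator, Real.norm_eq_abs, abs_mul, M.abs_sign, mul_one]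
  split_ifs <;> simp [mul_nonneg]

variable [IsProbabilityMeasure P]

lemma integrable_pairTerm (p : Fin D × Fin D) : Integrable (M.pairTerm x y p) P :=
  .of_bound (M.measurable_pairTerm x y p).aestronglyMeasurable _
    (ae_of_all _ (M.norm_pairTerm_le x y p))

lemma integrable_pairTerm_mul (p q : Fin D × Fin D) :
    Integrable (fun ω => M.pairTerm x y p ω * M.pairTerm x y q ω) P :=
  (M.integrable_pairTerm x y q).bdd_mul (M.measurable_pairTerm x y p).aestronglyMeasurable
    (ae_of_all _ (M.norm_pairTerm_le x y p))

lemma integral_sign (i : Fin D) : ∫ ω, M.s ω i ∂P = 0 := by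
  have hS : MeasurableSet {ω | M.s ω i = 1} := M.measurable_sign i (measurableSet_singleton 1)
  have hs : (fun ω => M.s ω i)
      = fun ω => {ω | M.s ω i = 1}.indicator (fun _ => (2 : ℝ)) ω - 1 := by
    funext ω
    rcases M.sign_val ω i with h | h <;> norm_num [Set.indicator, h]
  rw [hs, integral_sub ((integrable_const _).indicator hS) (integrable_const _),
    integral_indicator_const _ hS, measureReal_def, M.sign_prob i]
  simp

lemma integral_sign_mul_eq_zero {a : Fin D} {T : Finset (Fin D)} (ha : a ∉ T)
    {g : (T → ℝ) → ℝ} (hg : Measurable g) :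
    ∫ ω, M.s ω a * g (fun b => M.s ω b) ∂P = 0 := by
  have hindep := M.sign_indep.indepFun_finset {a} T (disjoint_singleton_left.2 ha)
    M.measurable_sign
  have hfactor : ∫ ω, M.s ω a * g (fun b => M.s ω b) ∂P
      = (∫ ω, M.s ω a ∂P) * ∫ ω, g (fun b => M.s ω b) ∂P :=
    (hindep.comp (measurable_pi_apply (⟨a, mem_singleton_self a⟩ : ({a} : Finset (Fin D))))
      hg).integral_mul_eq_mul_integral (M.measurable_sign a).aestronglyMeasurable
      (hg.comp (measurable_pi_lambda _ fun b => M.measurable_sign b)).aestronglyMeasurable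
  rw [hfactor, M.integral_sign, zero_mul]

lemma integral_sign_mul_sign {i j : Fin D} (hij : i ≠ j) : ∫ ω, M.s ω i * M.s ω j ∂P = 0 :=
  M.integral_sign_mul_eq_zero (T := {j}) (notMem_singleton.2 hij)
    (g := fun v => v ⟨j, mem_singleton_self j⟩) (measurable_pi_apply _)

lemma integral_sign_pair_mul_sign_pair {p q : Fin D × Fin D} (hp : p.1 ≠ p.2)
    (hq : q.1 ≠ q.2) :
    ∫ ω, M.s ω p.1 * M.s ω p.2 * (M.s ω q.1 * M.s ω q.2) ∂P
      = if q = p ∨ q = p.swap then 1 else 0 := by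
  have hzero {a b c d : Fin D} (ha : a ∉ ({b, c, d} : Finset (Fin D))) :
      ∫ ω, M.s ω a * M.s ω b * (M.s ω c * M.s ω d) ∂P = 0 := by
    simp_rw [mul_assoc]
    exact M.integral_sign_mul_eq_zero ha
      (g := fun v => v ⟨b, by simp⟩ * (v ⟨c, by simp⟩ * v ⟨d, by simp⟩)) (by fun_prop)
  split_ifs with h
  · have hone (ω : Ω) : M.s ω p.1 * M.s ω p.2 * (M.s ω q.1 * M.s ω q.2) = 1 := by
      have h1 := M.sign_mul_self ω p.1
      have h2 := M.sign_mul_self ω p.2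
      obtain rfl | rfl := h
      · linear_combination (M.s ω q.2 * M.s ω q.2) * h1 + h2
      · simp only [Prod.fst_swap, Prod.snd_swap]
        linear_combination (M.s ω p.2 * M.s ω p.2) * h1 + h2
    simp [hone]
  · by_cases h1 : p.1 ∈ ({q.1, q.2} : Finset (Fin D))
    · -- `{q.1, q.2}` contains `p.1` but is not `{p.1, p.2}`, so it misses `p.2`.
      have h2 : p.2 ∉ ({p.1, q.1, q.2} : Finset (Fin D)) := by
        obtain ⟨p1, p2⟩ := p
        obtain ⟨q1, q2⟩ := q
        simp only [mem_insert, mem_singleton, Prod.mk.injEq, Prod.swap_prod_mk] at *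
        grind
      simp_rw [mul_comm (M.s _ p.1) (M.s _ p.2)]
      exact hzero h2
    · exact hzero (by simpa [hp] using h1)

lemma integral_pairTerm {p : Fin D × Fin D} (hp : p.1 ≠ p.2) :
    ∫ ω, M.pairTerm x y p ω ∂P = 0 := by
  have h := M.integral_hash_mul_sign (collisionIndicator p) (g := fun t => t p.1 * t p.2)
    (by fun_prop)
  simp only [pairTerm, integral_mul_const, h, M.integral_sign_mul_sign hp, mul_zero, zero_mul]

lemma integral_pairTerm_mul {p q : Fin D × Fin D} (hp : p.1 ≠ p.2) (hq : q.1 ≠ q.2) :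
    ∫ ω, M.pairTerm x y p ω * M.pairTerm x y q ω ∂P
      = if q = p ∨ q = p.swap then x p.1 * y p.2 * (x q.1 * y q.2) / K else 0 := by
  have hsplit : (fun ω => M.pairTerm x y p ω * M.pairTerm x y q ω)
      = fun ω => collisionIndicator p (M.η ω) * collisionIndicator q (M.η ω)
          * (M.s ω p.1 * M.s ω p.2 * (M.s ω q.1 * M.s ω q.2))
          * (x p.1 * y p.2 * (x q.1 * y q.2)) := by
    funext ω
    simp only [pairTerm]
    ring
  have h := M.integral_hash_mul_sign (fun e => collisionIndicator p e * collisionIndicator q e)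
    (g := fun t => t p.1 * t p.2 * (t q.1 * t q.2)) (by fun_prop)
  rw [hsplit, integral_mul_const, h, M.integral_sign_pair_mul_sign_pair hp hq]
  split_ifs with hqp
  · have hcoll : collisionIndicator q = collisionIndicator (κ := Fin K) p := by
      rcases hqp with rfl | rfl
      · rfl
      · exact collisionIndicator_swap p
    simp only [hcoll, collisionIndicator_mul_self, M.integral_collisionIndicator hp]
    ring
  · simp

lemma integral_sum_pairTerm : ∫ ω, ∑ p ∈ univ.offDiag, M.pairTerm x y p ω ∂P = 0 := by
  rw [integral_finsetSum _ fun p _ => M.integrable_pairTerm x y p]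
  exact sum_eq_zero fun p hp => M.integral_pairTerm x y (mem_offDiag.1 hp).2.2

lemma integrable_sq_sum_pairTerm :
    Integrable (fun ω => (∑ p ∈ univ.offDiag, M.pairTerm x y p ω) ^ 2) P := by
  simp only [sq, sum_mul_sum]
  exact integrable_finsetSum _ fun p _ => integrable_finsetSum _ fun q _ =>
    M.integrable_pairTerm_mul x y p q

lemma integral_sq_sum_pairTerm :
    ∫ ω, (∑ p ∈ univ.offDiag, M.pairTerm x y p ω) ^ 2 ∂P
      = (∑ p ∈ univ.offDiag, x p.1 * y p.2 * (x p.1 * y p.2 + x p.2 * y p.1)) / K := by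
  simp only [sq, sum_mul_sum]
  rw [integral_finsetSum _ fun p _ => integrable_finsetSum _ fun q _ =>
    M.integrable_pairTerm_mul x y p q, sum_div]
  refine sum_congr rfl fun p hp => ?_
  have hp' := (mem_offDiag.1 hp).2.2
  have hswap : p ≠ p.swap := fun h => hp' (congrArg Prod.fst h)
  rw [integral_finsetSum _ fun q _ => M.integrable_pairTerm_mul x y p q,
    sum_congr rfl fun q hq => M.integral_pairTerm_mul x y hp' (mem_offDiag.1 hq).2.2,
    sum_eq_add_of_mem p p.swap hp (by simpa [eq_comm] using hp) hswap
      fun q _ hq => if_neg (by tauto)]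
  simp [hswap.symm]
  ring

lemma integral_sum_CS_mul_CS :
    ∫ ω, ∑ k, M.CS ω x k * M.CS ω y k ∂P = ∑ i, x i * y i := by
  simp only [M.sum_CS_mul_CS x y]
  rw [integral_add (integrable_const _)
    (integrable_finsetSum _ fun p _ => M.integrable_pairTerm x y p), M.integral_sum_pairTerm]
  simp

lemma var_sum_CS_mul_CS :
    var P (fun ω => ∑ k, M.CS ω x k * M.CS ω y k)
      = ∫ ω, (∑ p ∈ univ.offDiag, M.pairTerm x y p ω) ^ 2 ∂P := by
  simp only [M.sum_CS_mul_CS x y]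
  exact var_const_add_of_integral_eq_zero _
    (integrable_finsetSum _ fun p _ => M.integrable_pairTerm x y p)
    (M.integrable_sq_sum_pairTerm x y) (M.integral_sum_pairTerm x y)

lemma var_sum_CS_mul_CS_nonneg : 0 ≤ var P (fun ω => ∑ k, M.CS ω x k * M.CS ω y k) := by
  rw [var_sum_CS_mul_CS]
  exact integral_nonneg fun ω => sq_nonneg _

lemma var_sum_CS_mul_CS_le :
    var P (fun ω => ∑ k, M.CS ω x k * M.CS ω y k)
      ≤ ((∑ i, x i ^ 2) * (∑ i, y i ^ 2) + (∑ i, x i * y i) ^ 2) / K := by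
  rw [var_sum_CS_mul_CS, integral_sq_sum_pairTerm]
  gcongr
  exact sum_offDiag_le x y

end CountSketchModel

theorem countSketch_factorized_product_mean_variance_general
    {Ω : Type*} [MeasurableSpace Ω] (P : Measure Ω) [IsProbabilityMeasure P]
    (D₁ D₂ Kr Kh : ℕ)
    (Mr : CountSketchModel Ω P D₁ Kr) (Mh : CountSketchModel Ω P D₂ Kh)
    (hindep : IndepFun (fun ω => (Mr.η ω, Mr.s ω)) (fun ω => (Mh.η ω, Mh.s ω)) P)
    (rt rt' : Fin D₁ → ℝ) (h h' : Fin D₂ → ℝ) :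
    (∫ ω, (∑ k, Mr.CS ω rt k * Mr.CS ω rt' k) * (∑ k, Mh.CS ω h k * Mh.CS ω h' k) ∂P
        = (∑ i, rt i * rt' i) * (∑ i, h i * h' i))
    ∧ var P (fun ω =>
          (∑ k, Mr.CS ω rt k * Mr.CS ω rt' k) * (∑ k, Mh.CS ω h k * Mh.CS ω h' k))
        ≤ ((∑ i, rt i ^ 2) * (∑ i, rt' i ^ 2) + (∑ i, rt i * rt' i) ^ 2) / Kr
              * (((∑ i, h i ^ 2) * (∑ i, h' i ^ 2) + (∑ i, h i * h' i) ^ 2) / Kh)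
          + (∑ i, rt i * rt' i) ^ 2
              * (((∑ i, h i ^ 2) * (∑ i, h' i ^ 2) + (∑ i, h i * h' i) ^ 2) / Kh)
          + (∑ i, h i * h' i) ^ 2
              * (((∑ i, rt i ^ 2) * (∑ i, rt' i ^ 2) + (∑ i, rt i * rt' i) ^ 2) / Kr) := by
  have hAB := Mr.indepFun_sum_CS_mul_CS rt rt' Mh hindep h h'
  have hA := (Mr.measurable_sum_CS_mul_CS rt rt').aestronglyMeasurable (μ := P)
  have hB := (Mh.measurable_sum_CS_mul_CS h h').aestronglyMeasurable (μ := P)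
  refine ⟨?_, ?_⟩
  · rw [← Mr.integral_sum_CS_mul_CS rt rt', ← Mh.integral_sum_CS_mul_CS h h']
    exact hAB.integral_mul_eq_mul_integral hA hB
  · rw [var_mul_of_indepFun hAB hA hB, Mr.integral_sum_CS_mul_CS, Mh.integral_sum_CS_mul_CS]
    have hA₀ := Mr.var_sum_CS_mul_CS_nonneg rt rt'
    have hB₀ := Mh.var_sum_CS_mul_CS_nonneg h h'
    have hA₁ := Mr.var_sum_CS_mul_CS_le rt rt'
    have hB₁ := Mh.var_sum_CS_mul_CS_le h h'
    gcongr

/-- For two independent CountSketches `CS_r : ℝ^{D₁} → ℝ^{K_r}`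
and `CS_h : ℝ^{D₂} → ℝ^{K_h}` and fixed vectors `r̃, r̃′ ∈ ℝ^{D₁}`, `h, h′ ∈ ℝ^{D₂}`,
setting `A = ⟨CS_r(r̃), CS_r(r̃′)⟩`, `B = ⟨CS_h(h), CS_h(h′)⟩`, `α = ⟨r̃, r̃′⟩`,
`β = ⟨h, h′⟩`, one has `E[A·B] = α·β` and
`Var[A·B] ≤ V_r·V_h + α²·V_h + β²·V_r`, where
`V_r = (‖r̃‖²·‖r̃′‖² + α²)/K_r` and `V_h = (‖h‖²·‖h′‖² + β²)/K_h`. -/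
theorem countSketch_factorized_product_mean_variance
    {Ω : Type*} [MeasurableSpace Ω] (P : Measure Ω) [IsProbabilityMeasure P]
    (D₁ D₂ Kr Kh : ℕ) (hD₁ : 0 < D₁) (hD₂ : 0 < D₂) (hKr : 0 < Kr) (hKh : 0 < Kh)
    (Mr : CountSketchModel Ω P D₁ Kr) (Mh : CountSketchModel Ω P D₂ Kh)
    (hindep : IndepFun (fun ω => (Mr.η ω, Mr.s ω)) (fun ω => (Mh.η ω, Mh.s ω)) P)
    (rt rt' : Fin D₁ → ℝ) (h h' : Fin D₂ → ℝ) :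
    (∫ ω, (∑ k, Mr.CS ω rt k * Mr.CS ω rt' k) * (∑ k, Mh.CS ω h k * Mh.CS ω h' k) ∂P
        = (∑ i, rt i * rt' i) * (∑ i, h i * h' i))
    ∧ var P (fun ω =>
          (∑ k, Mr.CS ω rt k * Mr.CS ω rt' k) * (∑ k, Mh.CS ω h k * Mh.CS ω h' k))
        ≤ ((∑ i, rt i ^ 2) * (∑ i, rt' i ^ 2) + (∑ i, rt i * rt' i) ^ 2) / Kr
              * (((∑ i, h i ^ 2) * (∑ i, h' i ^ 2) + (∑ i, h i * h' i) ^ 2) / Kh)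
          + (∑ i, rt i * rt' i) ^ 2
              * (((∑ i, h i ^ 2) * (∑ i, h' i ^ 2) + (∑ i, h i * h' i) ^ 2) / Kh)
          + (∑ i, h i * h' i) ^ 2
              * (((∑ i, rt i ^ 2) * (∑ i, rt' i ^ 2) + (∑ i, rt i * rt' i) ^ 2) / Kr) :=
  countSketch_factorized_product_mean_variance_general P D₁ D₂ Kr Kh Mr Mh hindep rt rt' h h'
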